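/- arXiv:2003.09769 — 3 statements merged into one kernel-verified Lean document; each statement's English description precedes it below -/
import Mathlib

section
/- Let ⊕ be a commutative monoid operation on values. Performing a sequence of incremental updates V[f(i)] ⊕= h(i) for i ranging over a list L (starting from an initial total function V₀ : K → M) yields the function k ↦ V₀(k) ⊕ (the ⊕-sum of h(i) over all i ∈ L with f(i) = k). That is, the group-by-and-aggregate bulk computation equals the result of the sequential loop. -/
lemma foldl_add_init {I M : Type*} [AddCommMonoid M] (h : I → M) (a : M) (l : List I) :
    l.foldl (fun acc i => acc + h i) a = a + l.foldl (fun acc i => acc + h i) 0 := by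
  induction l generalizing a with
  | nil => simp
  | cons x xs ih =>
    simp only [List.foldl_cons]
    rw [ih (a + h x), ih (0 + h x), zero_add, add_assoc]

theorem loop_eq_groupby_aggregate {I K M : Type*} [DecidableEq K] [AddCommMonoid M]
    (f : I → K) (h : I → M) (V₀ : K → M) (L : List I) :
    List.foldl (fun V i => Function.update V (f i) (V (f i) + h i)) V₀ L =
      fun k => V₀ k + (L.filter (fun i => decide (f i = k))).foldl
          (fun acc i => acc + h i) 0 := by
  induction L generalizing V₀ with
  | nil => funext k; simp
  | cons x xs ih =>
    funext k
    simp only [List.foldl_cons, ih, List.filter_cons]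
    by_cases hk : f x = k
    · subst hk
      rw [Function.update_self]
      simp only [decide_true, if_true, List.foldl_cons, zero_add]
      rw [foldl_add_init (h := h) (a := h x), add_assoc]
    · rw [Function.update_of_ne (Ne.symm hk)]
      simp [hk]
end

section
/- If the destination index function f : I → K is injective on the elements of the list L (no two distinct positions of L have the same image under f), then for each i ∈ L, the final value at key f(i) after the sequential loop V[f(i)] ⊕= h(i) equals V₀(f(i)) ⊕ h(i). This justifies eliminating the group-by when the group-by key is unique. -/
/-! The loop adds to the entry at key `k` exactly the values `h j` of the positions `j` with
`f j = k`. When `f` is injective on the duplicate-free list `L`, the only such position for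
`k = f i` is `i` itself, and it occurs once. -/

section AccumulateLoop

variable {I K M : Type*} [DecidableEq K] [AddCommMonoid M] (f : I → K) (h : I → M)

theorem foldl_update_add_apply (L : List I) (V₀ : K → M) (k : K) :
    (List.foldl (fun V j => Function.update V (f j) (V (f j) + h j)) V₀ L) k =
      V₀ k + ((L.filter fun j => f j = k).map h).sum := by
  induction L generalizing V₀ with
  | nil => simp
  | cons a t ih =>
    rw [List.foldl_cons, ih]
    by_cases hak : f a = k
    · subst hak
      simp [add_assoc]
    · simp [hak, Function.update_of_ne (Ne.symm hak)]

theorem filter_apply_eq_apply_eq_singleton [DecidableEq I] {L : List I} (hnodup : L.Nodup)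
    (hinj : ∀ i ∈ L, ∀ j ∈ L, f i = f j → i = j) {i : I} (hi : i ∈ L) :
    (L.filter fun j => f j = f i) = [i] := by
  have hfilter : (L.filter fun j => f j = f i) = L.filter fun j => j = i :=
    List.filter_congr fun j hj => by
      simpa using ⟨hinj j hj i hi, fun hji => congrArg f hji⟩
  rw [hfilter, List.filter_eq, List.count_eq_one_of_mem hnodup hi, List.replicate_one]

end AccumulateLoop

theorem loop_unique_key {I K M : Type*} [DecidableEq K] [AddCommMonoid M]
    (f : I → K) (h : I → M) (V₀ : K → M) (L : List I)
    (hnodup : L.Nodup)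
    (hinj : ∀ i ∈ L, ∀ j ∈ L, f i = f j → i = j) :
    ∀ i ∈ L,
      (List.foldl (fun V j => Function.update V (f j) (V (f j) + h j)) V₀ L) (f i) =
        V₀ (f i) + h i := by
  classical
  intro i hi
  rw [foldl_update_add_apply, filter_apply_eq_apply_eq_singleton f hnodup hinj hi]
  simp
end

section
/- Correctness of group-by-based bulk translation of the grouping loop 'for i in L do C[key(i)] ⊕= val(i)' starting from the constant-zero array: the final array maps each k to the ⊕-sum of val(i) over i ∈ L with key(i) = k, and maps k to the identity e when no such i exists. -/
theorem groupby_loop_aux {I K M : Type*} [DecidableEq K] [AddCommMonoid M]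
    (key : I → K) (val : I → M) (L : List I) :
    ∀ C : K → M,
    List.foldl (fun C i => Function.update C (key i) (C (key i) + val i)) C L =
      fun k => (L.filter (fun i => decide (key i = k))).foldl
          (fun a i => a + val i) (C k) := by
  induction L with
  | nil => intro C; simp
  | cons a t ih =>
    intro C
    simp only [List.foldl_cons]
    rw [ih]
    funext k
    by_cases h : key a = k
    · subst h
      simp [Function.update]
    · simp [Function.update, h, Ne.symm h]

theorem groupby_loop_from_zero {I K M : Type*} [DecidableEq K] [AddCommMonoid M]
    (key : I → K) (val : I → M) (L : List I) :
    List.foldl (fun C i => Function.update C (key i) (C (key i) + val i))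
        (fun _ : K => (0 : M)) L =
      fun k => (L.filter (fun i => decide (key i = k))).foldl
          (fun a i => a + val i) 0 := by
  rw [groupby_loop_aux]
end
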